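/- arXiv:2303.12325 — 7 statements merged into one kernel-verified Lean document; each statement's English description precedes it below -/
import Mathlib

section
/- Let G = (A ∪ B, E) be a bipartite graph with a distinguished set C ⊆ A ∪ B of critical vertices. If N is a critical matching in G (i.e., no matching of G matches strictly more vertices of C than N does) and M is any matching in G, then the number of critical vertices of A matched by N is at least the number of critical vertices of A matched by M. -/
/-- `M` is a matching: no two distinct edges share an endpoint. -/
def IsMatching {A B : Type*} (M : Finset (A × B)) : Prop :=
  ∀ e ∈ M, ∀ f ∈ M, (e.1 = f.1 ∨ e.2 = f.2) → e = f

/-- Number of critical vertices of `A` (members of `CA`) matched by `M`. -/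
def critA {A B : Type*} [DecidableEq A] (CA : Finset A) (M : Finset (A × B)) : ℕ :=
  (M.filter fun e => e.1 ∈ CA).card

/-- Number of critical vertices of `B` (members of `CB`) matched by `M`. -/
def critB {A B : Type*} [DecidableEq B] (CB : Finset B) (M : Finset (A × B)) : ℕ :=
  (M.filter fun e => e.2 ∈ CB).card

/-- Total number of critical vertices matched by `M`. -/
def critTotal {A B : Type*} [DecidableEq A] [DecidableEq B]
    (CA : Finset A) (CB : Finset B) (M : Finset (A × B)) : ℕ :=
  critA CA M + critB CB M

/-- `N` is a critical matching in the graph with edge set `E`: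
no matching of the graph matches strictly more critical vertices than `N`. -/
def IsCriticalMatching {A B : Type*} [DecidableEq A] [DecidableEq B]
    (E : Finset (A × B)) (CA : Finset A) (CB : Finset B) (N : Finset (A × B)) : Prop :=
  IsMatching N ∧ N ⊆ E ∧
    ∀ M : Finset (A × B), IsMatching M → M ⊆ E →
      critTotal CA CB M ≤ critTotal CA CB N

lemma md_exchange {A B : Type*} [DecidableEq A] [DecidableEq B]
    (N : Finset (A × B)) (hN : IsMatching N) :
    ∀ n (P : Finset (A × B)), (N \ P).card ≤ n → IsMatching P →
    ∃ Q, IsMatching Q ∧ Q ⊆ P ∪ N ∧ (∀ e ∈ P, ∃ f ∈ Q, f.1 = e.1) ∧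
      (∀ e ∈ N, ∃ f ∈ Q, f.2 = e.2) := by
  intro n
  induction n with
  | zero =>
    intro P hcard hP
    have hsub : N ⊆ P := by
      rw [Nat.le_zero, Finset.card_eq_zero, Finset.sdiff_eq_empty_iff_subset] at hcard
      exact hcard
    exact ⟨P, hP, Finset.subset_union_left, fun e he => ⟨e, he, rfl⟩,
      fun e he => ⟨e, hsub he, rfl⟩⟩
  | succ n ih =>
    intro P hcard hP
    by_cases hall : ∀ e ∈ N, ∃ f ∈ P, f.2 = e.2
    · exact ⟨P, hP, Finset.subset_union_left, fun e he => ⟨e, he, rfl⟩, hall⟩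
    · push_neg at hall
      obtain ⟨e, heN, hb⟩ := hall
      obtain ⟨a, b⟩ := e
      simp only at hb
      by_cases ha : ∃ f ∈ P, f.1 = a
      · -- a covered by (a, b') in P; swap
        obtain ⟨f, hfP, hf1⟩ := ha
        have hf : f = (a, f.2) := Prod.ext hf1 rfl
        rw [hf] at hfP
        set b' := f.2 with hb'def
        have hbb' : b' ≠ b := fun h => hb _ hfP h
        have hnotN : (a, b') ∉ N := by
          intro h
          exact hbb' (congrArg Prod.snd (hN _ h _ heN (Or.inl rfl)))
        set P' := insert (a, b) (P.erase (a, b')) with hP'def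
        have habP : (a, b) ∉ P := fun h => hb _ h rfl
        have hP'match : IsMatching P' := by
          intro x hx y hy hxy
          simp only [hP'def, Finset.mem_insert, Finset.mem_erase] at hx hy
          rcases hx with hx | hx <;> rcases hy with hy | hy
          · rw [hx, hy]
          · exfalso
            subst hx
            rcases hxy with h1 | h2
            · exact hy.1 (hP _ hy.2 _ hfP (Or.inl h1.symm))
            · exact hb _ hy.2 h2.symm
          · exfalso
            subst hy
            rcases hxy with h1 | h2
            · exact hx.1 (hP _ hx.2 _ hfP (Or.inl h1))
            · exact hb _ hx.2 h2
          · exact hP _ hx.2 _ hy.2 hxy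
        have hsub : N \ P' ⊆ (N \ P).erase (a, b) := by
          intro x hx
          simp only [Finset.mem_sdiff, hP'def, Finset.mem_insert, Finset.mem_erase,
            Finset.mem_sdiff] at hx ⊢
          refine ⟨fun h => hx.2 (Or.inl h), hx.1, fun hxP => hx.2 (Or.inr ⟨?_, hxP⟩)⟩
          intro h
          exact hnotN (h ▸ hx.1)
        have hcard' : (N \ P').card ≤ n := by
          have h1 : ((N \ P).erase (a, b)).card < (N \ P).card :=
            Finset.card_erase_lt_of_mem (Finset.mem_sdiff.mpr ⟨heN, habP⟩)
          have := Finset.card_le_card hsub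
          omega
        obtain ⟨Q, hQm, hQsub, hQA, hQB⟩ := ih P' hcard' hP'match
        refine ⟨Q, hQm, ?_, ?_, hQB⟩
        · intro x hx
          rcases Finset.mem_union.mp (hQsub hx) with h | h
          · simp only [hP'def, Finset.mem_insert, Finset.mem_erase] at h
            rcases h with h | h
            · exact Finset.mem_union_right _ (h ▸ heN)
            · exact Finset.mem_union_left _ h.2
          · exact Finset.mem_union_right _ h
        · intro x hxP
          by_cases hx : x = (a, b')
          · obtain ⟨f, hfQ, hf1⟩ := hQA (a, b) (Finset.mem_insert_self _ _)
            exact ⟨f, hfQ, hx ▸ hf1⟩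
          · exact hQA x (Finset.mem_insert_of_mem (Finset.mem_erase.mpr ⟨hx, hxP⟩))
      · -- a uncovered: just add (a, b)
        push_neg at ha
        have habP : (a, b) ∉ P := fun h => hb _ h rfl
        set P' := insert (a, b) P with hP'def
        have hP'match : IsMatching P' := by
          intro x hx y hy hxy
          simp only [hP'def, Finset.mem_insert] at hx hy
          rcases hx with hx | hx <;> rcases hy with hy | hy
          · rw [hx, hy]
          · exfalso
            subst hx
            rcases hxy with h1 | h2
            · exact ha _ hy h1.symm
            · exact hb _ hy h2.symm
          · exfalso
            subst hy
            rcases hxy with h1 | h2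
            · exact ha _ hx h1
            · exact hb _ hx h2
          · exact hP _ hx _ hy hxy
        have hsub : N \ P' ⊆ (N \ P).erase (a, b) := by
          intro x hx
          simp only [Finset.mem_sdiff, hP'def, Finset.mem_insert, Finset.mem_erase] at hx ⊢
          exact ⟨fun h => hx.2 (Or.inl h), hx.1, fun h => hx.2 (Or.inr h)⟩
        have hcard' : (N \ P').card ≤ n := by
          have h1 : ((N \ P).erase (a, b)).card < (N \ P).card :=
            Finset.card_erase_lt_of_mem (Finset.mem_sdiff.mpr ⟨heN, habP⟩)
          have := Finset.card_le_card hsub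
          omega
        obtain ⟨Q, hQm, hQsub, hQA, hQB⟩ := ih P' hcard' hP'match
        refine ⟨Q, hQm, ?_, fun x hxP => hQA x (Finset.mem_insert_of_mem hxP), hQB⟩
        intro x hx
        rcases Finset.mem_union.mp (hQsub hx) with h | h
        · simp only [hP'def, Finset.mem_insert] at h
          rcases h with h | h
          · exact Finset.mem_union_right _ (h ▸ heN)
          · exact Finset.mem_union_left _ h
        · exact Finset.mem_union_right _ h

lemma critA_mono {A B : Type*} [DecidableEq A] [DecidableEq B]
    (CA : Finset A) (M Q : Finset (A × B)) (hM : IsMatching M)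
    (h : ∀ e ∈ M, ∃ f ∈ Q, f.1 = e.1) :
    critA CA M ≤ critA CA Q := by
  classical
  apply Finset.card_le_card_of_injOn
    (fun e => if h' : ∃ f ∈ Q, f.1 = e.1 then h'.choose else e)
  · intro e he
    simp only [Finset.mem_coe, Finset.mem_filter] at he ⊢
    rw [dif_pos (h e he.1)]
    obtain ⟨hfQ, hf1⟩ := (h e he.1).choose_spec
    exact ⟨hfQ, by rw [hf1]; exact he.2⟩
  · intro e he e' he' heq
    simp only [Finset.mem_coe, Finset.mem_filter] at he he'
    dsimp only at heq
    rw [dif_pos (h e he.1), dif_pos (h e' he'.1)] at heq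
    have h1 := (h e he.1).choose_spec.2
    have h2 := (h e' he'.1).choose_spec.2
    exact hM _ he.1 _ he'.1 (Or.inl (by rw [← h1, ← h2, heq]))

lemma critB_mono {A B : Type*} [DecidableEq A] [DecidableEq B]
    (CB : Finset B) (M Q : Finset (A × B)) (hM : IsMatching M)
    (h : ∀ e ∈ M, ∃ f ∈ Q, f.2 = e.2) :
    critB CB M ≤ critB CB Q := by
  classical
  apply Finset.card_le_card_of_injOn
    (fun e => if h' : ∃ f ∈ Q, f.2 = e.2 then h'.choose else e)
  · intro e he
    simp only [Finset.mem_coe, Finset.mem_filter] at he ⊢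
    rw [dif_pos (h e he.1)]
    obtain ⟨hfQ, hf2⟩ := (h e he.1).choose_spec
    exact ⟨hfQ, by rw [hf2]; exact he.2⟩
  · intro e he e' he' heq
    simp only [Finset.mem_coe, Finset.mem_filter] at he he'
    dsimp only at heq
    rw [dif_pos (h e he.1), dif_pos (h e' he'.1)] at heq
    have h1 := (h e he.1).choose_spec.2
    have h2 := (h e' he'.1).choose_spec.2
    exact hM _ he.1 _ he'.1 (Or.inr (by rw [← h1, ← h2, heq]))

/-- If `N` is a critical matching and `M` is any matching of the same
bipartite graph, then `N` matches at least as many critical vertices of `A` as `M` does. -/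
theorem critical_matching_maximizes_side_A
    {A B : Type*} [DecidableEq A] [DecidableEq B]
    (E : Finset (A × B)) (CA : Finset A) (CB : Finset B)
    (N M : Finset (A × B))
    (hN : IsCriticalMatching E CA CB N)
    (hM : IsMatching M) (hME : M ⊆ E) :
    critA CA M ≤ critA CA N := by
  obtain ⟨hNm, hNE, hNcrit⟩ := hN
  obtain ⟨Q, hQm, hQsub, hQA, hQB⟩ :=
    md_exchange N hNm (N \ M).card M le_rfl hM
  have hQE : Q ⊆ E := hQsub.trans (Finset.union_subset hME hNE)
  have h1 : critA CA M ≤ critA CA Q := critA_mono CA M Q hM hQA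
  have h2 : critB CB N ≤ critB CB Q := critB_mono CB N Q hNm hQB
  have h3 := hNcrit Q hQm hQE
  unfold critTotal at h3
  omega
end

section
/- Let G = (A ∪ B, E) be a bipartite graph with critical vertex set C ⊆ A ∪ B. Any two critical matchings M1 and M2 match the same number of critical vertices from A, and the same number of critical vertices from B. -/
open Finset

lemma critA_insert {A B : Type*} [DecidableEq A] [DecidableEq B]
    (CA : Finset A) (M : Finset (A × B)) (x : A × B) (hx : x ∉ M) :
    critA CA (insert x M) = critA CA M + (if x.1 ∈ CA then 1 else 0) := by
  unfold critA
  rw [Finset.filter_insert]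
  split
  · rw [Finset.card_insert_of_notMem (fun h => hx (Finset.mem_filter.mp h).1)]
  · simp

lemma critB_insert {A B : Type*} [DecidableEq A] [DecidableEq B]
    (CB : Finset B) (M : Finset (A × B)) (x : A × B) (hx : x ∉ M) :
    critB CB (insert x M) = critB CB M + (if x.2 ∈ CB then 1 else 0) := by
  unfold critB
  rw [Finset.filter_insert]
  split
  · rw [Finset.card_insert_of_notMem (fun h => hx (Finset.mem_filter.mp h).1)]
  · simp

lemma critA_le_of_critical {A B : Type*} [DecidableEq A] [DecidableEq B]
    (E : Finset (A × B)) (CA : Finset A) (CB : Finset B) :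
    ∀ n (M1 M2 : Finset (A × B)), (M2 \ M1).card = n →
      IsCriticalMatching E CA CB M1 → IsCriticalMatching E CA CB M2 →
      critA CA M1 ≤ critA CA M2 := by
  intro n
  induction n using Nat.strong_induction_on with
  | _ n IH =>
    intro M1 M2 hn h1 h2
    obtain ⟨hm1, hs1, hmax1⟩ := h1
    obtain ⟨hm2, hs2, hmax2⟩ := h2
    by_contra hlt
    push_neg at hlt
    -- find a critical A-vertex covered by M1 but not M2
    have hinj1 : Set.InjOn Prod.fst ((M1.filter fun e => e.1 ∈ CA : Finset (A × B)) : Set (A × B)) := by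
      intro x hx y hy hxy
      exact hm1 x (Finset.mem_filter.mp hx).1 y (Finset.mem_filter.mp hy).1 (Or.inl hxy)
    have hinj2 : Set.InjOn Prod.fst ((M2.filter fun e => e.1 ∈ CA : Finset (A × B)) : Set (A × B)) := by
      intro x hx y hy hxy
      exact hm2 x (Finset.mem_filter.mp hx).1 y (Finset.mem_filter.mp hy).1 (Or.inl hxy)
    have hc1 : ((M1.filter fun e => e.1 ∈ CA).image Prod.fst).card = critA CA M1 :=
      Finset.card_image_of_injOn hinj1
    have hc2 : ((M2.filter fun e => e.1 ∈ CA).image Prod.fst).card = critA CA M2 :=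
      Finset.card_image_of_injOn hinj2
    have hns : ¬ ((M1.filter fun e => e.1 ∈ CA).image Prod.fst) ⊆
        ((M2.filter fun e => e.1 ∈ CA).image Prod.fst) := by
      intro h
      have := Finset.card_le_card h
      omega
    obtain ⟨a, haS1, haS2⟩ := Finset.not_subset.mp hns
    obtain ⟨e, he, rfl⟩ := Finset.mem_image.mp haS1
    have heM1 : e ∈ M1 := (Finset.mem_filter.mp he).1
    have heCA : e.1 ∈ CA := (Finset.mem_filter.mp he).2
    have hA2 : ∀ f ∈ M2, f.1 ≠ e.1 := by
      intro f hf hfe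
      exact haS2 (Finset.mem_image.mpr ⟨f, Finset.mem_filter.mpr ⟨hf, hfe ▸ heCA⟩, hfe⟩)
    have heM2 : e ∉ M2 := fun h => hA2 e h rfl
    by_cases hb : ∃ f ∈ M2, f.2 = e.2
    · -- shift case
      obtain ⟨f, hf, hfe⟩ := hb
      have hfne : f ≠ e := fun h => hA2 f hf (by rw [h])
      have hfM1 : f ∉ M1 := by
        intro h
        exact hfne (hm1 f h e heM1 (Or.inr hfe))
      set M2' : Finset (A × B) := insert e (M2.erase f) with hM2'
      have heE : e ∉ M2.erase f := fun h => heM2 (Finset.mem_of_mem_erase h)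
      have hm2' : IsMatching M2' := by
        intro x hx y hy hxy
        rcases Finset.mem_insert.mp hx with rfl | hx' <;>
          rcases Finset.mem_insert.mp hy with rfl | hy'
        · rfl
        · exfalso
          have hyM2 := Finset.mem_of_mem_erase hy'
          rcases hxy with h | h
          · exact hA2 y hyM2 h.symm
          · exact (Finset.ne_of_mem_erase hy')
              (hm2 y hyM2 f hf (Or.inr (h ▸ hfe.symm)))
        · exfalso
          have hxM2 := Finset.mem_of_mem_erase hx'
          rcases hxy with h | h
          · exact hA2 x hxM2 h
          · exact (Finset.ne_of_mem_erase hx')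
              (hm2 x hxM2 f hf (Or.inr (hfe.symm ▸ h)))
        · exact hm2 x (Finset.mem_of_mem_erase hx') y (Finset.mem_of_mem_erase hy')
            hxy
      have hs2' : M2' ⊆ E :=
        Finset.insert_subset (hs1 heM1) ((Finset.erase_subset _ _).trans hs2)
      -- crit counts
      have hM2eq : insert f (M2.erase f) = M2 := Finset.insert_erase hf
      have hfE : f ∉ M2.erase f := Finset.notMem_erase _ _
      have hA2eq : critA CA M2 = critA CA (M2.erase f) + (if f.1 ∈ CA then 1 else 0) := by
        conv_lhs => rw [← hM2eq]
        exact critA_insert CA _ f hfE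
      have hB2eq : critB CB M2 = critB CB (M2.erase f) + (if f.2 ∈ CB then 1 else 0) := by
        conv_lhs => rw [← hM2eq]
        exact critB_insert CB _ f hfE
      have hA2'eq : critA CA M2' = critA CA (M2.erase f) + 1 := by
        rw [hM2', critA_insert CA _ e heE, if_pos heCA]
      have hB2'eq : critB CB M2' = critB CB (M2.erase f) + (if f.2 ∈ CB then 1 else 0) := by
        rw [hM2', critB_insert CB _ e heE, hfe]
      have hle := hmax2 M2' hm2' hs2'
      unfold critTotal at hle
      have hfCA : f.1 ∈ CA := by
        by_contra h
        rw [if_neg h] at hA2eq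
        omega
      rw [if_pos hfCA] at hA2eq
      have htoteq : critTotal CA CB M2' = critTotal CA CB M2 := by
        unfold critTotal; omega
      have h2' : IsCriticalMatching E CA CB M2' :=
        ⟨hm2', hs2', fun M hM hME => (hmax2 M hM hME).trans_eq htoteq.symm⟩
      -- measure decreases
      have hsd : M2' \ M1 = (M2 \ M1).erase f := by
        ext x
        simp only [hM2', Finset.mem_sdiff, Finset.mem_insert, Finset.mem_erase]
        constructor
        · rintro ⟨rfl | ⟨hxf, hxM2⟩, hxM1⟩
          · exact absurd heM1 hxM1
          · exact ⟨hxf, hxM2, hxM1⟩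
        · rintro ⟨hxf, hxM2, hxM1⟩
          exact ⟨Or.inr ⟨hxf, hxM2⟩, hxM1⟩
      have hfmem : f ∈ M2 \ M1 := Finset.mem_sdiff.mpr ⟨hf, hfM1⟩
      have hcard : (M2' \ M1).card < n := by
        rw [hsd, Finset.card_erase_of_mem hfmem, hn]
        have : 0 < n := hn ▸ Finset.card_pos.mpr ⟨f, hfmem⟩
        omega
      have := IH _ hcard M1 M2' rfl ⟨hm1, hs1, hmax1⟩ h2'
      omega
    · -- terminal case: e can be added to M2
      push_neg at hb
      set M' : Finset (A × B) := insert e M2 with hM'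
      have hm' : IsMatching M' := by
        intro x hx y hy hxy
        rcases Finset.mem_insert.mp hx with rfl | hx' <;>
          rcases Finset.mem_insert.mp hy with rfl | hy'
        · rfl
        · exfalso
          rcases hxy with h | h
          · exact hA2 y hy' h.symm
          · exact hb y hy' h.symm
        · exfalso
          rcases hxy with h | h
          · exact hA2 x hx' h
          · exact hb x hx' h
        · exact hm2 x hx' y hy' hxy
      have hs' : M' ⊆ E := Finset.insert_subset (hs1 heM1) hs2
      have hle := hmax2 M' hm' hs'
      have hAeq : critA CA M' = critA CA M2 + 1 := by
        rw [hM', critA_insert CA _ e heM2, if_pos heCA]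
      have hBge : critB CB M2 ≤ critB CB M' := by
        rw [hM', critB_insert CB _ e heM2]
        omega
      unfold critTotal at hle
      omega

/-- Any two critical matchings match the same number of critical vertices
from `A`, and the same number of critical vertices from `B`. -/
theorem critical_matchings_same_counts
    {A B : Type*} [DecidableEq A] [DecidableEq B]
    (E : Finset (A × B)) (CA : Finset A) (CB : Finset B)
    (M1 M2 : Finset (A × B))
    (h1 : IsCriticalMatching E CA CB M1)
    (h2 : IsCriticalMatching E CA CB M2) :
    critA CA M1 = critA CA M2 ∧ critB CB M1 = critB CB M2 := by
  have hA12 := critA_le_of_critical E CA CB _ M1 M2 rfl h1 h2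
  have hA21 := critA_le_of_critical E CA CB _ M2 M1 rfl h2 h1
  obtain ⟨hm1, hs1, hmax1⟩ := h1
  obtain ⟨hm2, hs2, hmax2⟩ := h2
  have ht12 := hmax1 M2 hm2 hs2
  have ht21 := hmax2 M1 hm1 hs1
  unfold critTotal at ht12 ht21
  omega
end

section
/- Let G = (A ∪ B, E) be a bipartite graph. If M and M' are matchings in G such that M is maximal and the symmetric difference M ⊕ M' contains no augmenting path of length 3 with respect to M, then |M| ≥ (2/3)·|M'|. -/
/-- If `M` is a maximal matching and `M ⊕ M'` contains no augmenting path of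
length 3 with respect to `M`, then `|M| ≥ (2/3)·|M'|`. -/
theorem maximal_no_three_aug_two_thirds
    {A B : Type*} [DecidableEq A] [DecidableEq B]
    (E M M' : Finset (A × B))
    (hM : IsMatching M) (hME : M ⊆ E)
    (hM' : IsMatching M') (hM'E : M' ⊆ E)
    (hmax : ∀ e ∈ E, ¬ ((∀ b, (e.1, b) ∉ M) ∧ (∀ a, (a, e.2) ∉ M)))
    (haug3 : ¬ ∃ (a1 : A) (b : B) (a : A) (b1 : B),
      (a, b) ∈ M ∧
      (a1, b) ∈ M' ∧ (a1, b) ∉ M ∧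
      (a, b1) ∈ M' ∧ (a, b1) ∉ M ∧
      (∀ b', (a1, b') ∉ M) ∧ (∀ a', (a', b1) ∉ M)) :
    2 * M'.card ≤ 3 * M.card := by
  classical
  -- f e' = number of edges of M adjacent to e'
  set f : A × B → ℕ := fun e' => (M.filter (fun e => e'.1 = e.1 ∨ e'.2 = e.2)).card with hf
  set D : Finset (A × B) := M'.filter (fun e' => f e' ≤ 1) with hD
  -- every edge of M' is adjacent to some edge of M
  have hone : ∀ e' ∈ M', 1 ≤ f e' := by
    intro e' he'
    have h := hmax e' (hM'E he')
    have hne : (M.filter (fun e => e'.1 = e.1 ∨ e'.2 = e.2)).Nonempty := by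
      by_contra hemp
      apply h
      constructor
      · intro b hb
        exact hemp ⟨(e'.1, b), Finset.mem_filter.mpr ⟨hb, Or.inl rfl⟩⟩
      · intro a ha
        exact hemp ⟨(a, e'.2), Finset.mem_filter.mpr ⟨ha, Or.inr rfl⟩⟩
    exact Finset.card_pos.mpr hne
  -- each edge of M is adjacent to at most 2 edges of M'
  have htwo : ∀ e ∈ M, (M'.filter (fun e' => e'.1 = e.1 ∨ e'.2 = e.2)).card ≤ 2 := by
    intro e _
    have : (M'.filter (fun e' => e'.1 = e.1 ∨ e'.2 = e.2)).card ≤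
        (Finset.univ : Finset Bool).card := by
      apply Finset.card_le_card_of_injOn (fun e' => decide (e'.1 = e.1))
      · intro _ _; exact Finset.mem_univ _
      · intro x hx y hy hxy
        simp only [Finset.coe_filter, Set.mem_setOf_eq] at hx hy
        obtain ⟨hxM', hxadj⟩ := hx
        obtain ⟨hyM', hyadj⟩ := hy
        by_cases h1 : x.1 = e.1
        · have h2 : y.1 = e.1 := by
            by_contra h2
            simp [h1, h2] at hxy
          exact hM' x hxM' y hyM' (Or.inl (h1.trans h2.symm))
        · have h2 : y.1 ≠ e.1 := by
            by_contra h2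
            simp [h1, h2] at hxy
          have hx2 : x.2 = e.2 := hxadj.resolve_left h1
          have hy2 : y.2 = e.2 := hyadj.resolve_left h2
          exact hM' x hxM' y hyM' (Or.inr (hx2.trans hy2.symm))
    simpa using this
  -- |D| ≤ |M|
  have hDM : D.card ≤ M.card := by
    have hch : ∀ e' : A × B, ∃ e : A × B, e' ∈ D →
        e ∈ M ∧ (e'.1 = e.1 ∨ e'.2 = e.2) := by
      intro e'
      by_cases h : e' ∈ D
      · have he'M' : e' ∈ M' := (Finset.mem_filter.mp h).1
        have h1 : 1 ≤ f e' := hone e' he'M'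
        have hne : (M.filter (fun e => e'.1 = e.1 ∨ e'.2 = e.2)).Nonempty :=
          Finset.card_pos.mp h1
        obtain ⟨e, he⟩ := hne
        have := Finset.mem_filter.mp he
        exact ⟨e, fun _ => this⟩
      · exact ⟨e', fun h' => absurd h' h⟩
    choose ψ hψ using hch
    apply Finset.card_le_card_of_injOn ψ
    · intro x hx; exact (hψ x hx).1
    · intro x hx' y hy' hxy
      have hx := hx'; have hy := hy'
      simp only [Finset.mem_coe] at hx hy
      obtain ⟨hxM, hxadj⟩ := hψ x hx
      obtain ⟨hyM, hyadj⟩ := hψ y hy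
      rw [hxy] at hxM hxadj
      set e : A × B := ψ y with he
      have hxM' : x ∈ M' := (Finset.mem_filter.mp hx).1
      have hyM' : y ∈ M' := (Finset.mem_filter.mp hy).1
      have hxD : f x ≤ 1 := (Finset.mem_filter.mp hx).2
      have hyD : f y ≤ 1 := (Finset.mem_filter.mp hy).2
      -- helper: if an edge of M' is adjacent to e ∈ M on one side only, and it is in D,
      -- then its other endpoint is unmatched... we do the case analysis directly
      rcases hxadj with hx1 | hx2 <;> rcases hyadj with hy1 | hy2
      · exact hM' x hxM' y hyM' (Or.inl (hx1.trans hy1.symm))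
      · -- x.1 = e.1, y.2 = e.2
        by_cases hxe : x.2 = e.2
        · exact hM' x hxM' y hyM' (Or.inr (hxe.trans hy2.symm))
        by_cases hye : y.1 = e.1
        · exact hM' x hxM' y hyM' (Or.inl (hx1.trans hye.symm))
        -- build an augmenting path of length 3: ⟨y.1, e.2, e.1, x.2⟩
        exfalso
        apply haug3
        refine ⟨y.1, e.2, e.1, x.2, ?_, ?_, ?_, ?_, ?_, ?_, ?_⟩
        · simpa using hxM
        · have : (y.1, e.2) = y := by rw [← hy2]
          rw [this]; exact hyM'
        · intro hmem
          have : (y.1, e.2) = e := hM _ hmem _ hxM (Or.inr rfl)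
          exact hye (by rw [← this])
        · have : (e.1, x.2) = x := by rw [← hx1]
          rw [this]; exact hxM'
        · intro hmem
          have : (e.1, x.2) = e := hM _ hmem _ hxM (Or.inl rfl)
          exact hxe (by rw [← this])
        · -- y.1 is unmatched in M
          intro b' hb'
          have hmem1 : (y.1, b') ∈ M.filter (fun ee => y.1 = ee.1 ∨ y.2 = ee.2) :=
            Finset.mem_filter.mpr ⟨hb', Or.inl rfl⟩
          have hmem2 : e ∈ M.filter (fun ee => y.1 = ee.1 ∨ y.2 = ee.2) :=
            Finset.mem_filter.mpr ⟨hxM, Or.inr hy2⟩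
          have hne : (y.1, b') ≠ e := by
            intro hcontra
            exact hye (by rw [← hcontra])
          have : 1 < f y := Finset.one_lt_card.mpr ⟨_, hmem1, _, hmem2, hne⟩
          omega
        · -- x.2 is unmatched in M
          intro a' ha'
          have hmem1 : (a', x.2) ∈ M.filter (fun ee => x.1 = ee.1 ∨ x.2 = ee.2) :=
            Finset.mem_filter.mpr ⟨ha', Or.inr rfl⟩
          have hmem2 : e ∈ M.filter (fun ee => x.1 = ee.1 ∨ x.2 = ee.2) :=
            Finset.mem_filter.mpr ⟨hxM, Or.inl hx1⟩
          have hne : (a', x.2) ≠ e := by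
            intro hcontra
            exact hxe (by rw [← hcontra])
          have : 1 < f x := Finset.one_lt_card.mpr ⟨_, hmem1, _, hmem2, hne⟩
          omega
      · -- x.2 = e.2, y.1 = e.1 (symmetric)
        by_cases hxe : x.1 = e.1
        · exact hM' x hxM' y hyM' (Or.inl (hxe.trans hy1.symm))
        by_cases hye : y.2 = e.2
        · exact hM' x hxM' y hyM' (Or.inr (hx2.trans hye.symm))
        exfalso
        apply haug3
        refine ⟨x.1, e.2, e.1, y.2, ?_, ?_, ?_, ?_, ?_, ?_, ?_⟩
        · simpa using hxM
        · have : (x.1, e.2) = x := by rw [← hx2]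
          rw [this]; exact hxM'
        · intro hmem
          have : (x.1, e.2) = e := hM _ hmem _ hxM (Or.inr rfl)
          exact hxe (by rw [← this])
        · have : (e.1, y.2) = y := by rw [← hy1]
          rw [this]; exact hyM'
        · intro hmem
          have : (e.1, y.2) = e := hM _ hmem _ hxM (Or.inl rfl)
          exact hye (by rw [← this])
        · intro b' hb'
          have hmem1 : (x.1, b') ∈ M.filter (fun ee => x.1 = ee.1 ∨ x.2 = ee.2) :=
            Finset.mem_filter.mpr ⟨hb', Or.inl rfl⟩
          have hmem2 : e ∈ M.filter (fun ee => x.1 = ee.1 ∨ x.2 = ee.2) :=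
            Finset.mem_filter.mpr ⟨hxM, Or.inr hx2⟩
          have hne : (x.1, b') ≠ e := by
            intro hcontra
            exact hxe (by rw [← hcontra])
          have : 1 < f x := Finset.one_lt_card.mpr ⟨_, hmem1, _, hmem2, hne⟩
          omega
        · intro a' ha'
          have hmem1 : (a', y.2) ∈ M.filter (fun ee => y.1 = ee.1 ∨ y.2 = ee.2) :=
            Finset.mem_filter.mpr ⟨ha', Or.inr rfl⟩
          have hmem2 : e ∈ M.filter (fun ee => y.1 = ee.1 ∨ y.2 = ee.2) :=
            Finset.mem_filter.mpr ⟨hxM, Or.inl hy1⟩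
          have hne : (a', y.2) ≠ e := by
            intro hcontra
            exact hye (by rw [← hcontra])
          have : 1 < f y := Finset.one_lt_card.mpr ⟨_, hmem1, _, hmem2, hne⟩
          omega
      · exact hM' x hxM' y hyM' (Or.inr (hx2.trans hy2.symm))
  -- double counting
  have hsum : ∑ e' ∈ M', f e' = ∑ e ∈ M, (M'.filter (fun e' => e'.1 = e.1 ∨ e'.2 = e.2)).card := by
    simp only [hf, Finset.card_filter]
    exact Finset.sum_comm
  have hsumM : ∑ e ∈ M, (M'.filter (fun e' => e'.1 = e.1 ∨ e'.2 = e.2)).card ≤ 2 * M.card := by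
    calc ∑ e ∈ M, (M'.filter (fun e' => e'.1 = e.1 ∨ e'.2 = e.2)).card
        ≤ ∑ _e ∈ M, 2 := Finset.sum_le_sum htwo
      _ = 2 * M.card := by rw [Finset.sum_const, smul_eq_mul, mul_comm]
  have hlow : 2 * M'.card ≤ (∑ e' ∈ M', f e') + D.card := by
    have : ∀ e' ∈ M', 2 ≤ f e' + (if f e' ≤ 1 then 1 else 0) := by
      intro e' he'
      have := hone e' he'
      by_cases h : f e' ≤ 1 <;> simp [h] <;> omega
    calc 2 * M'.card = ∑ _e' ∈ M', 2 := by rw [Finset.sum_const, smul_eq_mul, mul_comm]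
      _ ≤ ∑ e' ∈ M', (f e' + (if f e' ≤ 1 then 1 else 0)) := Finset.sum_le_sum this
      _ = (∑ e' ∈ M', f e') + ∑ e' ∈ M', (if f e' ≤ 1 then 1 else 0) := Finset.sum_add_distrib
      _ = (∑ e' ∈ M', f e') + D.card := by rw [hD, Finset.card_filter]
  calc 2 * M'.card ≤ (∑ e' ∈ M', f e') + D.card := hlow
    _ ≤ 2 * M.card + M.card := by
        rw [hsum]
        exact Nat.add_le_add hsumM hDM
    _ = 3 * M.card := by ring
end

section
/- There exists an instance of the stable marriage problem with strict preferences and critical vertices on both sides that admits no matching which is simultaneously weakly stable and critical. Concretely: take A = {a1,a2,a3}, B = {b1,b2,b3,b4}, critical vertices {a2, b2}, edges with preferences a1: b1 ≻ b2; a2: (b3 = b4) ≻ b1; a3: b3; b1: a1 ≻ a2; b2: a1; b3: (a2 = a3); b4: a2. No matching of this instance is both weakly stable and critical. -/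
/-- `(a, b)` is a blocking pair for matching `M` in the graph with edge set `E`,
where `prefA a b b'` means `a` strictly prefers `b` over `b'`, and similarly `prefB`. -/
def IsBlockingPair {A B : Type*} (E M : Finset (A × B))
    (prefA : A → B → B → Prop) (prefB : B → A → A → Prop) (a : A) (b : B) : Prop :=
  (a, b) ∈ E ∧ (a, b) ∉ M ∧
  ((∀ b', (a, b') ∉ M) ∨ (∃ b', (a, b') ∈ M ∧ prefA a b b')) ∧
  ((∀ a', (a', b) ∉ M) ∨ (∃ a', (a', b) ∈ M ∧ prefB b a a'))

/-- `M` is weakly stable: it admits no blocking pair. -/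
def WeaklyStable {A B : Type*} (E M : Finset (A × B))
    (prefA : A → B → B → Prop) (prefB : B → A → A → Prop) : Prop :=
  ∀ a b, ¬ IsBlockingPair E M prefA prefB a b

/-- `M` is relaxed stable w.r.t. critical sets `CA ⊆ A`, `CB ⊆ B`:
every blocking pair `(a, b)` is justified, i.e. `a` is matched with `M(a)` critical,
or `b` is matched with `M(b)` critical. -/
def RelaxedStable {A B : Type*} (E M : Finset (A × B))
    (prefA : A → B → B → Prop) (prefB : B → A → A → Prop)
    (CA : Finset A) (CB : Finset B) : Prop :=
  ∀ a b, IsBlockingPair E M prefA prefB a b →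
    (∃ b', (a, b') ∈ M ∧ b' ∈ CB) ∨ (∃ a', (a', b) ∈ M ∧ a' ∈ CA)

/-! The concrete instance from Figure 1 of the paper:
`A = {a1, a2, a3}` (encoded as `Fin 3`), `B = {b1, b2, b3, b4}` (encoded as `Fin 4`),
critical vertices `a2` and `b2`, and ranked edges
a1: b1 ≻ b2; a2: (b3 = b4) ≻ b1; a3: b3; b1: a1 ≻ a2; b2: a1; b3: (a2 = a3); b4: a2. -/

/-- The edge set of the instance. -/
def instE : Finset (Fin 3 × Fin 4) :=
  {(0, 0), (0, 1), (1, 2), (1, 3), (1, 0), (2, 2)}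

/-- Rank that `a ∈ A` assigns to `b ∈ B` (99 on non-edges). -/
def instRkA : Fin 3 → Fin 4 → ℕ
  | 0, 0 => 1 | 0, 1 => 2
  | 1, 2 => 1 | 1, 3 => 1 | 1, 0 => 2
  | 2, 2 => 1
  | _, _ => 99

/-- Rank that `b ∈ B` assigns to `a ∈ A` (99 on non-edges). -/
def instRkB : Fin 4 → Fin 3 → ℕ
  | 0, 0 => 1 | 0, 1 => 2
  | 1, 0 => 1
  | 2, 1 => 1 | 2, 2 => 1
  | 3, 1 => 1
  | _, _ => 99

/-- `a` strictly prefers `b` over `b'`. -/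
def instPrefA (a : Fin 3) (b b' : Fin 4) : Prop := instRkA a b < instRkA a b'

/-- `b` strictly prefers `a` over `a'`. -/
def instPrefB (b : Fin 4) (a a' : Fin 3) : Prop := instRkB b a < instRkB b a'

/-- Critical vertices on the `A` side: just `a2`. -/
def instCA : Finset (Fin 3) := {1}

/-- Critical vertices on the `B` side: just `b2`. -/
def instCB : Finset (Fin 4) := {1}

/-- This instance (strict preferences, critical vertices on both sides)
admits no matching that is simultaneously weakly stable and critical. -/
theorem no_weaklyStable_critical_matching :
    ¬ ∃ M : Finset (Fin 3 × Fin 4),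
        IsMatching M ∧ M ⊆ instE ∧
        WeaklyStable instE M instPrefA instPrefB ∧
        IsCriticalMatching instE instCA instCB M := by
  rintro ⟨M, hM, hE, hWS, hCrit⟩
  -- the matching {(a1,b2),(a2,b3)} matches both critical vertices, so M must too
  have h2 : 2 ≤ critTotal instCA instCB M := by
    have h := hCrit.2.2 {(0,1),(1,2)} (by unfold IsMatching; decide) (by decide)
    have hN : critTotal instCA instCB ({(0,1),(1,2)} : Finset (Fin 3 × Fin 4)) = 2 := by
      decide
    omega
  have hA1 : critA instCA M ≤ 1 := by
    apply Finset.card_le_one.mpr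
    intro a ha b hb
    rw [Finset.mem_filter] at ha hb
    have ha1 : a.1 = 1 := by simpa [instCA] using ha.2
    have hb1 : b.1 = 1 := by simpa [instCA] using hb.2
    exact hM a ha.1 b hb.1 (Or.inl (ha1.trans hb1.symm))
  have hB1 : critB instCB M ≤ 1 := by
    apply Finset.card_le_one.mpr
    intro a ha b hb
    rw [Finset.mem_filter] at ha hb
    have ha1 : a.2 = 1 := by simpa [instCB] using ha.2
    have hb1 : b.2 = 1 := by simpa [instCB] using hb.2
    exact hM a ha.1 b hb.1 (Or.inr (ha1.trans hb1.symm))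
  unfold critTotal at h2
  -- b2 is matched, and its only edge is to a1, so (a1,b2) ∈ M
  have hBpos : 0 < critB instCB M := by omega
  obtain ⟨e, he⟩ := Finset.card_pos.mp hBpos
  rw [Finset.mem_filter] at he
  have he2 : e.2 = 1 := by simpa [instCB] using he.2
  have heE : e ∈ instE := hE he.1
  have h01 : ((0:Fin 3), (1:Fin 4)) ∈ M := by
    have he' : e = (0,1) := by
      simp only [instE, Finset.mem_insert, Finset.mem_singleton] at heE
      rcases heE with h|h|h|h|h|h <;> subst h <;>
        first | rfl | exact absurd he2 (by decide)
    rw [he'] at he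
    exact he.1
  -- (a1,b1) is a blocking pair
  have h00 : ((0:Fin 3), (0:Fin 4)) ∉ M := by
    intro h
    exact absurd (hM (0,0) h (0,1) h01 (Or.inl rfl)) (by decide)
  refine hWS 0 0 ⟨by decide, h00, Or.inr ⟨1, h01, by unfold instPrefA instRkA; decide⟩, ?_⟩
  by_cases h10 : ((1:Fin 3), (0:Fin 4)) ∈ M
  · exact Or.inr ⟨1, h10, by unfold instPrefB instRkB; decide⟩
  · refine Or.inl fun a' haM => ?_
    fin_cases a'
    · exact h00 haM
    · exact h10 haM
    · exact absurd (hE haM) (by decide)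
end

section
/- Let G = (A ∪ B, E) be bipartite with a partition of A into levels A_0, …, A_L and of B into levels B_0, …, B_L, and let M be a matching such that every edge of M joins vertices of equal level. Suppose the levels A_{t+1} ∪ ⋯ ∪ A_{s+t} contain at most s vertices in total (where L = s+t), there are no edges from A_x to B_y with x > y+1, and every unmatched vertex of A lies in A_t ∪ A_{s+t} with any unmatched vertex of A_{s+t} having all its neighbours in B_{s+t}. Then there is no alternating path ρ in M ⊕ N (for any matching N) that starts at an unmatched vertex of A_{s+t} with an N-edge and reaches a vertex of a level ≤ t; in particular no such path exists whose endpoints would let N ⊕ ρ match strictly more vertices from A_{t+1} ∪ ⋯ ∪ A_{s+t}. -/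
/-- In the multilevel graph `G_M` (matched edges horizontal, no steep
downward edges, levels `A_{t+1}, …, A_{s+t}` containing at most `s` vertices, unmatched
`A`-vertices only at levels `t` and `s+t`, and unmatched `A`-vertices of level `s+t`
having all neighbours at level `s+t`), no alternating path in `M ⊕ N` starting with an
`N`-edge at an unmatched vertex of `A_{s+t}` can reach a vertex of level `≤ t`. -/
theorem no_alternating_path_reaching_low_level
    {A B : Type*} [Fintype A] [Fintype B] [DecidableEq A] [DecidableEq B]
    (E M : Finset (A × B)) (lvlA : A → ℕ) (lvlB : B → ℕ) (s t : ℕ)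
    (hs : 1 ≤ s)
    (hM : IsMatching M) (hME : M ⊆ E)
    (hbA : ∀ a, lvlA a ≤ s + t) (hbB : ∀ b, lvlB b ≤ s + t)
    -- matched edges join vertices of equal level
    (hhoriz : ∀ e ∈ M, lvlA e.1 = lvlB e.2)
    -- the levels A_{t+1}, …, A_{s+t} contain at most s vertices in total
    (hsize : (Finset.univ.filter fun a : A => t + 1 ≤ lvlA a).card ≤ s)
    -- no steep downward edges
    (hsteep : ∀ e ∈ E, lvlA e.1 ≤ lvlB e.2 + 1)
    -- unmatched A-vertices lie in A_t ∪ A_{s+t}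
    (hunA : ∀ a : A, (∀ b, (a, b) ∉ M) → lvlA a = t ∨ lvlA a = s + t)
    -- an unmatched vertex of A_{s+t} has all its neighbours in B_{s+t}
    (hunA' : ∀ a : A, (∀ b, (a, b) ∉ M) → lvlA a = s + t →
      ∀ b, (a, b) ∈ E → lvlB b = s + t)
    (N : Finset (A × B)) (hN : IsMatching N) (hNE : N ⊆ E)
    (a0 : A) (ha0 : ∀ b, (a0, b) ∉ M) (ha0lvl : lvlA a0 = s + t) :
    ¬ ∃ (m : ℕ) (u : ℕ → A) (v : ℕ → B),
        u 0 = a0 ∧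
        -- ρ alternates between N \ M edges and M edges
        (∀ i < m, (u i, v (i + 1)) ∈ N ∧ (u i, v (i + 1)) ∉ M ∧
                  (u (i + 1), v (i + 1)) ∈ M) ∧
        -- ρ is a path: vertices are pairwise distinct
        (∀ i ≤ m, ∀ j ≤ m, u i = u j → i = j) ∧
        (∀ i j, 1 ≤ i → i ≤ m → 1 ≤ j → j ≤ m → v i = v j → i = j) ∧
        -- ρ reaches a vertex of level ≤ t
        ((∃ i ≤ m, lvlA (u i) ≤ t) ∨
         (∃ i, 1 ≤ i ∧ i ≤ m ∧ lvlB (v i) ≤ t) ∨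
         (∃ w : B, (u m, w) ∈ N ∧ (u m, w) ∉ M ∧ lvlB w ≤ t)) := by
  rintro ⟨m, u, v, hu0, hstep, huinj, hvinj, hreach⟩
  have hMedge : ∀ i < m, lvlA (u (i+1)) = lvlB (v (i+1)) := fun i hi =>
    hhoriz _ (hstep i hi).2.2
  -- key level bound
  have hkey : ∀ i, 1 ≤ i → i ≤ m → s + t + 1 ≤ lvlA (u i) + i := by
    intro i
    induction i with
    | zero => omega
    | succ k ih =>
      intro _ hk
      rcases Nat.eq_zero_or_pos k with hk0 | hk1
      · subst hk0
        have he : (a0, v 1) ∈ E := by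
          have h := (hstep 0 (by omega)).1
          rw [hu0] at h
          exact hNE h
        have h3 := hunA' a0 ha0 ha0lvl (v 1) he
        have h2 := hMedge 0 (by omega)
        norm_num at h2 ⊢
        omega
      · have ihk := ih hk1 (by omega)
        have he : (u k, v (k+1)) ∈ N := (hstep k (by omega)).1
        have hst := hsteep _ (hNE he)
        have h2 := hMedge k (by omega)
        simp only at hst
        omega
  have hmlt : m < s := by
    by_contra hms
    push_neg at hms
    have hsub : ∀ i ≤ s, u i ∈ Finset.univ.filter fun a : A => t + 1 ≤ lvlA a := by
      intro i hi
      simp only [Finset.mem_filter, Finset.mem_univ, true_and]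
      rcases Nat.eq_zero_or_pos i with h0 | h1
      · subst h0; rw [hu0]; omega
      · have := hkey i h1 (le_trans hi hms); omega
    have hcard : (Finset.range (s+1)).card ≤
        (Finset.univ.filter fun a : A => t + 1 ≤ lvlA a).card := by
      apply Finset.card_le_card_of_injOn u
      · intro i hi
        exact hsub i (Nat.lt_succ_iff.mp (Finset.mem_range.mp hi))
      · intro i hi j hj hij
        have hi' : i ≤ m := le_trans (Nat.lt_succ_iff.mp (Finset.mem_range.mp hi)) hms
        have hj' : j ≤ m := le_trans (Nat.lt_succ_iff.mp (Finset.mem_range.mp hj)) hms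
        exact huinj i hi' j hj' hij
    rw [Finset.card_range] at hcard
    omega
  rcases hreach with ⟨i, him, hle⟩ | ⟨i, hi1, him, hle⟩ | ⟨w, hwN, hwM, hle⟩
  · rcases Nat.eq_zero_or_pos i with h0 | h1
    · subst h0; rw [hu0] at hle; omega
    · have := hkey i h1 him; omega
  · have h2 := hMedge (i-1) (by omega)
    rw [Nat.sub_add_cancel hi1] at h2
    have := hkey i hi1 him
    omega
  · rcases Nat.eq_zero_or_pos m with h0 | h1
    · subst h0
      rw [hu0] at hwN
      have := hunA' a0 ha0 ha0lvl w (hNE hwN)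
      omega
    · have hk := hkey m h1 le_rfl
      have hst := hsteep _ (hNE hwN)
      simp only at hst
      omega
end

section
/- Let M and M' be matchings in a graph G such that every connected component of M ⊕ M' that is an augmenting path with respect to M has length at least 5. Then |M| ≥ (2/3)|M'|. -/
/-- `M` is a matching in a (general) graph on vertex set `V`: a set of non-loop
edges, no two of which share a vertex. -/
def IsMatchingSym2 {V : Type*} (M : Finset (Sym2 V)) : Prop :=
  (∀ e ∈ M, ¬ e.IsDiag) ∧ ∀ e ∈ M, ∀ f ∈ M, ∀ v : V, v ∈ e → v ∈ f → e = f

/-- `v` is matched by `M`. -/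
def MatchedSym2 {V : Type*} (M : Finset (Sym2 V)) (v : V) : Prop :=
  ∃ e ∈ M, v ∈ e

/-- `f 0, f 1, …, f n` is an augmenting path of length `n` with respect to `M` in the
symmetric difference `M ⊕ M'`: vertices are pairwise distinct, edges alternate between
`M' \ M` (even positions) and `M \ M'` (odd positions), the first and last edges belong
to `M'`, and both endpoints are unmatched in `M`. -/
def IsAugPathSym2 {V : Type*} (M M' : Finset (Sym2 V)) (n : ℕ) (f : ℕ → V) : Prop :=
  Odd n ∧
  (∀ i ≤ n, ∀ j ≤ n, f i = f j → i = j) ∧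
  (∀ i < n,
    (Even i → s(f i, f (i + 1)) ∈ M' ∧ s(f i, f (i + 1)) ∉ M) ∧
    (¬ Even i → s(f i, f (i + 1)) ∈ M ∧ s(f i, f (i + 1)) ∉ M')) ∧
  ¬ MatchedSym2 M (f 0) ∧ ¬ MatchedSym2 M (f n)

/-- two distinct members determine a `Sym2`. -/
lemma sym2_eq_of_mem {V : Type*} {e : Sym2 V} {u v : V} (hu : u ∈ e) (hv : v ∈ e)
    (huv : u ≠ v) : e = s(u, v) := by
  induction e using Sym2.ind with
  | _ a b =>
    rw [Sym2.mem_iff] at hu hv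
    rcases hu with rfl|rfl <;> rcases hv with rfl|rfl <;>
      first | exact absurd rfl huv | simp [Sym2.eq_swap]

lemma sym2_other {V : Type*} {e : Sym2 V} {v : V} (hv : v ∈ e) (hd : ¬ e.IsDiag) :
    ∃ u, u ≠ v ∧ e = s(u, v) := by
  induction e using Sym2.ind with
  | _ a b =>
    rw [Sym2.mem_iff] at hv
    rw [Sym2.mk_isDiag_iff] at hd
    rcases hv with rfl|rfl
    · exact ⟨b, fun h => hd h.symm, Sym2.eq_swap⟩
    · exact ⟨a, hd, rfl⟩

lemma aug1 {V : Type*} (M M' : Finset (Sym2 V)) (u v : V) (huv : u ≠ v)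
    (he : s(u,v) ∈ M') (heM : s(u,v) ∉ M)
    (hu : ¬ MatchedSym2 M u) (hv : ¬ MatchedSym2 M v) :
    IsAugPathSym2 M M' 1 (fun i => if i = 0 then u else v) := by
  refine ⟨⟨0, rfl⟩, ?_, ?_, by simpa using hu, by simpa using hv⟩
  · intro i hi j hj hij
    interval_cases i <;> interval_cases j <;> simp_all
  · intro i hi
    interval_cases i
    constructor
    · intro _; simpa using ⟨he, heM⟩
    · intro h; exact absurd (Even.zero) h

lemma aug3 {V : Type*} (M M' : Finset (Sym2 V)) (u v w x : V)
    (huv : u ≠ v) (huw : u ≠ w) (hux : u ≠ x) (hvw : v ≠ w) (hvx : v ≠ x) (hwx : w ≠ x)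
    (h1 : s(u,v) ∈ M') (h1M : s(u,v) ∉ M)
    (h2 : s(v,w) ∈ M) (h2M : s(v,w) ∉ M')
    (h3 : s(w,x) ∈ M') (h3M : s(w,x) ∉ M)
    (hu : ¬ MatchedSym2 M u) (hx : ¬ MatchedSym2 M x) :
    IsAugPathSym2 M M' 3
      (fun i => if i = 0 then u else if i = 1 then v else if i = 2 then w else x) := by
  refine ⟨⟨1, rfl⟩, ?_, ?_, by simpa using hu, by simpa using hx⟩
  · intro i hi j hj hij
    interval_cases i <;> interval_cases j <;> simp_all
  · intro i hi
    interval_cases i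
    · exact ⟨fun _ => by simpa using ⟨h1, h1M⟩, fun h => absurd Even.zero h⟩
    · refine ⟨fun h => absurd h (by simp), fun _ => by simpa using ⟨h2, h2M⟩⟩
    · refine ⟨fun _ => by simpa using ⟨h3, h3M⟩, fun h => absurd (by simp : Even 2) h⟩

/-- If every connected component of `M ⊕ M'` that is an augmenting path
with respect to `M` has length at least 5, then `|M| ≥ (2/3)|M'|`. -/
theorem two_thirds_of_long_aug_paths
    {V : Type*} [Fintype V] [DecidableEq V]
    (M M' : Finset (Sym2 V))
    (hM : IsMatchingSym2 M) (hM' : IsMatchingSym2 M')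
    (hlong : ∀ (n : ℕ) (f : ℕ → V), IsAugPathSym2 M M' n f → 5 ≤ n) :
    2 * M'.card ≤ 3 * M.card := by
  classical
  set A : Finset (Sym2 V) := M' \ M with hAdef
  set B : Finset (Sym2 V) := M \ M' with hBdef
  -- reduce to 2|A| ≤ 3|B|
  suffices hkey : 2 * A.card ≤ 3 * B.card by
    have h1 : A.card + (M' ∩ M).card = M'.card := Finset.card_sdiff_add_card_inter M' M
    have h2 : B.card + (M ∩ M').card = M.card := Finset.card_sdiff_add_card_inter M M'
    have h3 : (M' ∩ M).card = (M ∩ M').card := by rw [Finset.inter_comm]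
    omega
  -- basic membership facts
  have hAsub : ∀ e ∈ A, e ∈ M' ∧ e ∉ M := fun e he => Finset.mem_sdiff.mp he
  have hBsub : ∀ e ∈ B, e ∈ M ∧ e ∉ M' := fun e he => Finset.mem_sdiff.mp he
  -- neighbor sets
  set N : Sym2 V → Finset (Sym2 V) := fun e' => B.filter (fun e => ∃ v, v ∈ e ∧ v ∈ e')
    with hNdef
  set N' : Sym2 V → Finset (Sym2 V) := fun e => A.filter (fun e' => ∃ v, v ∈ e ∧ v ∈ e')
    with hN'def
  -- L0: unmatched transfer
  have hL0 : ∀ (v : V) (e' : Sym2 V), e' ∈ A → v ∈ e' → (∀ g ∈ B, v ∉ g) →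
      ¬ MatchedSym2 M v := by
    intro v e' he' hv hfree ⟨g, hg, hvg⟩
    by_cases hg' : g ∈ M'
    · have := hM'.2 g hg' e' (hAsub e' he').1 v hvg hv
      exact (hAsub e' he').2 (this ▸ hg)
    · exact hfree g (Finset.mem_sdiff.mpr ⟨hg, hg'⟩) hvg
  -- every A-edge has a B-neighbor (else length-1 augmenting path)
  have hN1 : ∀ e' ∈ A, 1 ≤ (N e').card := by
    intro e' he'
    rw [Nat.one_le_iff_ne_zero, Ne, Finset.card_eq_zero]
    intro hemp
    have hfree : ∀ v ∈ e', ∀ g ∈ B, v ∉ g := by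
      intro v hv g hg hvg
      have : g ∈ N e' := Finset.mem_filter.mpr ⟨hg, v, hvg, hv⟩
      simp [hemp] at this
    obtain ⟨hM'e, hMe⟩ := hAsub e' he'
    have hd : ¬ e'.IsDiag := hM'.1 e' hM'e
    induction e' using Sym2.ind with
    | _ u v =>
      have huv : u ≠ v := by rwa [Sym2.mk_isDiag_iff] at hd
      have hu : ¬ MatchedSym2 M u :=
        hL0 u _ he' (Sym2.mem_mk_left u v) (hfree u (Sym2.mem_mk_left u v))
      have hv : ¬ MatchedSym2 M v :=
        hL0 v _ he' (Sym2.mem_mk_right u v) (hfree v (Sym2.mem_mk_right u v))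
      have := hlong 1 _ (aug1 M M' u v huv hM'e hMe hu hv)
      omega
  -- B-edges have at most 2 A-neighbors
  have hN'2 : ∀ e ∈ B, (N' e).card ≤ 2 := by
    intro e he
    obtain ⟨hMe, hM'e⟩ := hBsub e he
    have hd : ¬ e.IsDiag := hM.1 e hMe
    induction e using Sym2.ind with
    | _ p q =>
      have hpq : p ≠ q := by rwa [Sym2.mk_isDiag_iff] at hd
      have : (N' s(p,q)).card ≤ ({p, q} : Finset V).card := by
        apply Finset.card_le_card_of_injOn (fun a => if p ∈ a then p else q)
        · intro a ha
          by_cases h : p ∈ a <;> simp [h]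
        · intro a1 h1 a2 h2 heq
          obtain ⟨ha1, v1, hv1e, hv1a⟩ := Finset.mem_filter.mp h1
          obtain ⟨ha2, v2, hv2e, hv2a⟩ := Finset.mem_filter.mp h2
          simp only at heq
          by_cases c1 : p ∈ a1 <;> by_cases c2 : p ∈ a2 <;> simp [c1, c2] at heq
          · exact hM'.2 a1 (hAsub a1 ha1).1 a2 (hAsub a2 ha2).1 p c1 c2
          · exact absurd heq hpq
          · exact absurd heq.symm hpq
          · have hq1 : q ∈ a1 := by
              rcases Sym2.mem_iff.mp hv1e with rfl | rfl
              · exact absurd hv1a c1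
              · exact hv1a
            have hq2 : q ∈ a2 := by
              rcases Sym2.mem_iff.mp hv2e with rfl | rfl
              · exact absurd hv2a c2
              · exact hv2a
            exact hM'.2 a1 (hAsub a1 ha1).1 a2 (hAsub a2 ha2).1 q hq1 hq2
      calc (N' s(p,q)).card ≤ ({p, q} : Finset V).card := this
        _ ≤ 2 := Finset.card_insert_le _ _ |>.trans (by simp)
  -- double counting
  have hswap : ∑ e' ∈ A, (N e').card = ∑ e ∈ B, (N' e).card := by
    simp only [hNdef, hN'def, Finset.card_filter]
    exact Finset.sum_comm
  -- the set of A-edges with exactly one B-neighbor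
  set A₁ : Finset (Sym2 V) := A.filter (fun e' => (N e').card ≤ 1) with hA1def
  -- for e' ∈ A₁, N e' is a singleton; extract the unique neighbor
  set φ : Sym2 V → Sym2 V := fun e' => if h : (N e').Nonempty then h.choose else e'
    with hφdef
  have hφmem : ∀ e' ∈ A₁, N e' = {φ e'} := by
    intro e' he'
    obtain ⟨he'A, hle⟩ := Finset.mem_filter.mp he'
    have hcard : (N e').card = 1 := le_antisymm hle (hN1 e' he'A)
    obtain ⟨b, hb⟩ := Finset.card_eq_one.mp hcard
    have hne : (N e').Nonempty := by rw [hb]; exact ⟨b, Finset.mem_singleton_self b⟩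
    have : φ e' ∈ N e' := by rw [hφdef]; simpa [hne] using hne.choose_spec
    rw [hb] at this ⊢
    rw [Finset.mem_singleton.mp this]
  -- structure of an A₁-edge: e' = s(u,v), v ∈ φ e', u ∉ φ e', u unmatched in M
  have hstruct : ∀ e' ∈ A₁, ∃ u v, u ≠ v ∧ e' = s(u, v) ∧ v ∈ φ e' ∧ u ∉ φ e' ∧
      ¬ MatchedSym2 M u := by
    intro e' he'
    have he'A : e' ∈ A := (Finset.mem_filter.mp he').1
    have hsing := hφmem e' he'
    have hφB : φ e' ∈ N e' := hsing ▸ Finset.mem_singleton_self _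
    obtain ⟨hφB', v, hvφ, hve'⟩ := Finset.mem_filter.mp hφB
    have hd : ¬ e'.IsDiag := hM'.1 e' (hAsub e' he'A).1
    obtain ⟨u, huv, hef⟩ := sym2_other hve' hd
    have huφ : u ∉ φ e' := by
      intro huφ
      have : φ e' = s(u, v) := sym2_eq_of_mem huφ hvφ huv
      rw [← hef] at this
      exact (hAsub e' he'A).2 (this ▸ (hBsub _ hφB').1)
    refine ⟨u, v, huv, hef, hvφ, huφ, ?_⟩
    apply hL0 u e' he'A (hef ▸ Sym2.mem_mk_left u v)
    intro g hg hug
    have hgN : g ∈ N e' := Finset.mem_filter.mpr ⟨hg, u, hug, hef ▸ Sym2.mem_mk_left u v⟩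
    rw [hsing, Finset.mem_singleton] at hgN
    exact huφ (hgN ▸ hug)
  -- φ is injective on A₁ (else a length-3 augmenting path)
  have hinj : Set.InjOn φ ↑A₁ := by
    intro e1 h1 e2 h2 heq
    by_contra hne
    obtain ⟨u, v, huv, hef1, hvφ, huφ, hu⟩ := hstruct e1 h1
    obtain ⟨x, w, hxw, hef2, hwφ, hxφ, hx⟩ := hstruct e2 h2
    rw [heq] at hvφ huφ
    have he1A : e1 ∈ A := (Finset.mem_filter.mp h1).1
    have he2A : e2 ∈ A := (Finset.mem_filter.mp h2).1
    have hφB : φ e2 ∈ B := by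
      have := hφmem e2 h2 ▸ Finset.mem_singleton_self (φ e2)
      exact (Finset.mem_filter.mp this).1
    obtain ⟨hMeB, hM'eB⟩ := hBsub _ hφB
    have hvw : v ≠ w := by
      intro h
      exact hne (hM'.2 e1 (hAsub e1 he1A).1 e2 (hAsub e2 he2A).1 v
        (hef1 ▸ Sym2.mem_mk_right u v) (hef2 ▸ h ▸ Sym2.mem_mk_right x w))
    have heφ : φ e2 = s(v, w) := sym2_eq_of_mem hvφ hwφ hvw
    -- distinctness
    have hux : u ≠ x := by
      intro h
      exact hne (hM'.2 e1 (hAsub e1 he1A).1 e2 (hAsub e2 he2A).1 u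
        (hef1 ▸ Sym2.mem_mk_left u v) (hef2 ▸ h ▸ Sym2.mem_mk_left x w))
    have huw : u ≠ w := fun h => huφ (h ▸ hwφ)
    have hvx : v ≠ x := fun h => hxφ (h ▸ hvφ)
    have := hlong 3 _ (aug3 M M' u v w x huv huw hux hvw hvx
      (fun h => hxw h.symm)
      (hef1 ▸ (hAsub e1 he1A).1) (hef1 ▸ (hAsub e1 he1A).2)
      (heφ ▸ hMeB) (heφ ▸ hM'eB)
      (by rw [Sym2.eq_swap, ← hef2]; exact (hAsub e2 he2A).1)
      (by rw [Sym2.eq_swap, ← hef2]; exact (hAsub e2 he2A).2)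
      hu hx)
    omega
  have hA1B : A₁.card ≤ B.card := by
    apply Finset.card_le_card_of_injOn φ _ hinj
    intro e' he'
    have := hφmem e' he' ▸ Finset.mem_singleton_self (φ e')
    exact (Finset.mem_filter.mp this).1
  -- final counting
  have step1 : 2 * A.card ≤ (∑ e' ∈ A, (N e').card) + A₁.card := by
    have : A₁.card = ∑ e' ∈ A, (if (N e').card ≤ 1 then 1 else 0) := by
      rw [hA1def, Finset.card_filter]
    have h2 : 2 * A.card = ∑ _e' ∈ A, 2 := by
      rw [Finset.sum_const, smul_eq_mul, mul_comm]
    rw [this, h2, ← Finset.sum_add_distrib]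
    apply Finset.sum_le_sum
    intro e' he'
    have h1 := hN1 e' he'
    by_cases h : (N e').card ≤ 1
    · rw [if_pos h]; omega
    · rw [if_neg h]; omega
  have step2 : ∑ e ∈ B, (N' e).card ≤ 2 * B.card := by
    calc ∑ e ∈ B, (N' e).card ≤ ∑ _e ∈ B, 2 := Finset.sum_le_sum hN'2
      _ = 2 * B.card := by rw [Finset.sum_const, smul_eq_mul, mul_comm]
  calc 2 * A.card ≤ (∑ e' ∈ A, (N e').card) + A₁.card := step1
    _ = (∑ e ∈ B, (N' e).card) + A₁.card := by rw [hswap]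
    _ ≤ 2 * B.card + B.card := Nat.add_le_add step2 hA1B
    _ = 3 * B.card := by ring
end

section
/- Consider a bipartite graph G = (A ∪ B, E) with two-sided ties and critical set C, together with a matching M and a level function as in the multilevel graph G_M: matched edges join equal levels, no edge goes from A_x to B_y with x > y+1, all vertices of B at levels above t are matched to critical vertices of A, and any blocking pair (a,b) with respect to M has lvl(a) < lvl(b). Then M is relaxed stable: for every blocking pair (a,b), either lvl(b) ≤ t, in which case lvl(a) ≤ t−1 so a is matched to a critical vertex; or lvl(b) > t, in which case b is matched to a critical vertex. -/
/-- Given the multilevel structure of `G_M` (matched edges join equal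
levels, no steep downward edges, levels `0..t-1` of `B` and `t+1..s+t` of `A` contain
only critical vertices, every matched `A`-vertex of level `< t` has a critical partner,
all `B`-vertices of level `> t` are matched to critical `A`-vertices, unmatched
`A`-vertices lie at level `t` or `s+t`, and every blocking pair is an upward edge),
the matching `M` is relaxed stable; moreover, for each blocking pair `(a, b)`:
either `lvl(b) ≤ t`, in which case `lvl(a) ≤ t - 1` and `a` is matched to a critical
vertex, or `lvl(b) > t`, in which case `b` is matched to a critical vertex. -/
theorem relaxedStable_of_multilevel_structure
    {A B : Type*} [DecidableEq A] [DecidableEq B]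
    (E M : Finset (A × B))
    (prefA : A → B → B → Prop) (prefB : B → A → A → Prop)
    (CA : Finset A) (CB : Finset B)
    (lvlA : A → ℕ) (lvlB : B → ℕ) (s t : ℕ)
    (hM : IsMatching M) (hME : M ⊆ E)
    (hbA : ∀ a, lvlA a ≤ s + t) (hbB : ∀ b, lvlB b ≤ s + t)
    (hhoriz : ∀ e ∈ M, lvlA e.1 = lvlB e.2)
    (hsteep : ∀ e ∈ E, lvlA e.1 ≤ lvlB e.2 + 1)
    (hBcrit : ∀ b, lvlB b < t → b ∈ CB)
    (hAcrit : ∀ a, t < lvlA a → a ∈ CA)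
    (hhigh : ∀ b, t < lvlB b → ∃ a ∈ CA, (a, b) ∈ M)
    (hlowA : ∀ a b, (a, b) ∈ M → lvlA a < t → b ∈ CB)
    (hunA : ∀ a : A, (∀ b, (a, b) ∉ M) → lvlA a = t ∨ lvlA a = s + t)
    (hblock : ∀ a b, IsBlockingPair E M prefA prefB a b → lvlA a < lvlB b) :
    RelaxedStable E M prefA prefB CA CB ∧
    ∀ a b, IsBlockingPair E M prefA prefB a b →
      (lvlB b ≤ t ∧ lvlA a + 1 ≤ t ∧ ∃ b', (a, b') ∈ M ∧ b' ∈ CB) ∨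
      (t < lvlB b ∧ ∃ a', (a', b) ∈ M ∧ a' ∈ CA) := by
  have key : ∀ a b, IsBlockingPair E M prefA prefB a b →
      (lvlB b ≤ t ∧ lvlA a + 1 ≤ t ∧ ∃ b', (a, b') ∈ M ∧ b' ∈ CB) ∨
      (t < lvlB b ∧ ∃ a', (a', b) ∈ M ∧ a' ∈ CA) := by
    intro a b hbp
    have hlt := hblock a b hbp
    rcases le_or_gt (lvlB b) t with hle | hgt
    · left
      have hat : lvlA a < t := lt_of_lt_of_le hlt hle
      -- a must be matched
      rcases hbp.2.2.1 with hun | ⟨b', hb', _⟩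
      · rcases hunA a hun with h | h <;> omega
      · exact ⟨hle, hat, b', hb', hlowA a b' hb' hat⟩
    · right
      obtain ⟨a', ha', hmem⟩ := hhigh b hgt
      exact ⟨hgt, a', hmem, ha'⟩
  refine ⟨?_, key⟩
  intro a b hbp
  rcases key a b hbp with ⟨_, _, h⟩ | ⟨_, h⟩
  · exact Or.inl h
  · exact Or.inr h
end
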